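/- For w ∈ ℂ, let u(w) = (2w/(1+|w|²), (1−|w|²)/(1+|w|²)) ∈ ℂ × ℝ ≅ ℝ³ (the unit direction vector corresponding to w), with the Euclidean inner product ⟨(z,t),(z′,t′)⟩ = Re(z z̄′) + t t′. Then: (a) for every ν ∈ ℂ and A ∈ ℝ with 1 − ν̄e^{iA} ≠ 0, setting ξ = (ν + e^{iA})/(1 − ν̄e^{iA}), one has ⟨u(ξ), u(ν)⟩ = 0; (b) conversely, every w ∈ ℂ × ℝ with ‖w‖ = 1, ⟨w, u(ν)⟩ = 0 and w ≠ (0,−1) equals u((ν + e^{iA})/(1 − ν̄e^{iA})) for some A ∈ ℝ with 1 − ν̄e^{iA} ≠ 0. Thus A ↦ ξ(ν,A) parameterizes the oriented great circle in S² dual to the point with holomorphic coordinate ν. -/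

import Mathlib

/-- The unit direction vector of ℝ³ ≅ ℂ × ℝ corresponding to w ∈ ℂ (inverse stereographic
projection): u(w) = (2w/(1+|w|²), (1−|w|²)/(1+|w|²)). -/
noncomputable def udir (w : ℂ) : ℂ × ℝ :=
  (2 * w / (1 + Complex.normSq w), (1 - Complex.normSq w) / (1 + Complex.normSq w))

/-- The Euclidean inner product on ℂ × ℝ ≅ ℝ³. -/
def ip3 (x y : ℂ × ℝ) : ℝ := (x.1 * (starRingEnd ℂ) y.1).re + x.2 * y.2

/-!
Up to the positive factor `(1 + |ξ|²)(1 + |ν|²)`, the inner product `⟨u(ξ), u(ν)⟩` equals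
`|1 + ξν̄|² - |ξ - ν|²`, so `u(ξ) ⊥ u(ν)` exactly when `(ξ - ν) / (1 + ξν̄)` is unimodular.
The Möbius relation `ξ = (ν + e) / (1 - ν̄e)` is equivalent to `ξ - ν = e (1 + ξν̄)`, which gives
both directions; a unit vector `(z, t)` other than the south pole is `u(z / (1 + t))`.
-/

open Complex ComplexConjugate

lemma one_add_normSq_pos (z : ℂ) : 0 < 1 + normSq z := by
  linarith [normSq_nonneg z]

lemma ip3_udir_udir (ξ ν : ℂ) :
    ip3 (udir ξ) (udir ν) =
      (normSq (1 + ξ * conj ν) - normSq (ξ - ν)) / ((1 + normSq ξ) * (1 + normSq ν)) := by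
  have hξ := (one_add_normSq_pos ξ).ne'
  have hν := (one_add_normSq_pos ν).ne'
  simp only [ip3, udir, ← ofReal_one, ← ofReal_add, map_div₀, map_mul, conj_ofReal, map_ofNat]
  rw [div_mul_div_comm, ← ofReal_mul, div_ofReal_re]
  simp only [ofReal_one, normSq_apply, mul_re, mul_im, add_re, add_im, sub_re, sub_im, one_re,
    one_im, conj_re, conj_im, re_ofNat, im_ofNat]
  field_simp
  ring

lemma ip3_udir_udir_eq_zero_iff (ξ ν : ℂ) :
    ip3 (udir ξ) (udir ν) = 0 ↔ normSq (ξ - ν) = normSq (1 + ξ * conj ν) := by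
  rw [ip3_udir_udir, div_eq_zero_iff, sub_eq_zero, eq_comm, or_iff_left]
  exact mul_ne_zero (one_add_normSq_pos ξ).ne' (one_add_normSq_pos ν).ne'

lemma one_sub_conj_mul_ne_zero {ξ ν e : ℂ} (h : ξ * (1 - conj ν * e) = ν + e) :
    1 - conj ν * e ≠ 0 := by
  intro h0
  have he : e = -ν := by linear_combination (-1 : ℂ) * h + ξ * h0
  have : (1 + normSq ν : ℂ) = 0 := by
    rw [← mul_conj]; linear_combination h0 + conj ν * he
  exact (one_add_normSq_pos ν).ne' (by exact_mod_cast this)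

lemma sub_eq_mul_one_add_conj_mul_iff {ξ ν e : ℂ} :
    ξ - ν = e * (1 + ξ * conj ν) ↔ 1 - conj ν * e ≠ 0 ∧ ξ = (ν + e) / (1 - conj ν * e) := by
  constructor
  · intro h
    have h' : ξ * (1 - conj ν * e) = ν + e := by linear_combination h
    have hq := one_sub_conj_mul_ne_zero h'
    exact ⟨hq, (eq_div_iff hq).2 h'⟩
  · rintro ⟨hq, h⟩
    linear_combination (eq_div_iff hq).1 h

lemma exists_sub_eq_exp_mul_I_mul {ξ ν : ℂ} (h : normSq (ξ - ν) = normSq (1 + ξ * conj ν)) :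
    ∃ A : ℝ, ξ - ν = exp (A * I) * (1 + ξ * conj ν) := by
  have hd : 1 + ξ * conj ν ≠ 0 := by
    intro h0
    have hξ : ξ = ν := sub_eq_zero.1 (normSq_eq_zero.1 (by rw [h, h0, map_zero]))
    rw [hξ, mul_conj, ← ofReal_one, ← ofReal_add, ofReal_eq_zero] at h0
    exact (one_add_normSq_pos ν).ne' h0
  set e := (ξ - ν) / (1 + ξ * conj ν)
  have he : ‖e‖ = 1 := by
    rw [norm_def, normSq_div, h, div_self (normSq_eq_zero.not.2 hd), Real.sqrt_one]
  have hexp : exp (arg e * I) = e := by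
    simpa [he] using norm_mul_exp_arg_mul_I e
  exact ⟨arg e, by rw [hexp, div_mul_cancel₀ _ hd]⟩

lemma udir_div_one_add {z : ℂ} {t : ℝ} (h : normSq z + t ^ 2 = 1) (ht : 1 + t ≠ 0) :
    udir (z / (1 + t)) = (z, t) := by
  have hn : normSq (z / (1 + t)) = (1 - t) / (1 + t) := by
    rw [normSq_div, ← ofReal_one, ← ofReal_add, normSq_ofReal, (by linarith : normSq z = 1 - t ^ 2)]
    field_simp
    ring
  have ht' : (1 + t : ℂ) ≠ 0 := by exact_mod_cast ht
  ext <;> simp only [udir, hn]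
  · push_cast
    field_simp
    ring
  · field_simp
    ring

/-- A ↦ ξ(ν,A) = (ν + e^{iA})/(1 − ν̄e^{iA}) parameterizes the oriented great circle in S²
dual to the point with holomorphic coordinate ν: (a) u(ξ(ν,A)) ⊥ u(ν); (b) every unit
vector orthogonal to u(ν) other than the south pole (0,−1) is of this form. -/
theorem stmt10 (ν : ℂ) :
    (∀ A : ℝ, 1 - (starRingEnd ℂ) ν * Complex.exp ((A : ℂ) * Complex.I) ≠ 0 →
      ip3 (udir ((ν + Complex.exp ((A : ℂ) * Complex.I)) /
          (1 - (starRingEnd ℂ) ν * Complex.exp ((A : ℂ) * Complex.I)))) (udir ν) = 0) ∧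
    (∀ w : ℂ × ℝ, Complex.normSq w.1 + w.2 ^ 2 = 1 → ip3 w (udir ν) = 0 →
      w ≠ ((0 : ℂ), (-1 : ℝ)) →
      ∃ A : ℝ, 1 - (starRingEnd ℂ) ν * Complex.exp ((A : ℂ) * Complex.I) ≠ 0 ∧
        w = udir ((ν + Complex.exp ((A : ℂ) * Complex.I)) /
          (1 - (starRingEnd ℂ) ν * Complex.exp ((A : ℂ) * Complex.I)))) := by
  constructor
  · intro A hq
    have h := sub_eq_mul_one_add_conj_mul_iff.2 ⟨hq, rfl⟩
    rw [ip3_udir_udir_eq_zero_iff, h, normSq_mul, normSq_eq_norm_sq, norm_exp_ofReal_mul_I,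
      one_pow, one_mul]
  · rintro ⟨z, t⟩ hunit horth hne
    have ht : 1 + t ≠ 0 := by
      rintro ht
      have hz : normSq z = 0 := by nlinarith
      exact hne (by rw [normSq_eq_zero.1 hz, (by linarith : t = -1)])
    rw [← udir_div_one_add hunit ht] at horth ⊢
    rw [ip3_udir_udir_eq_zero_iff] at horth
    obtain ⟨A, hA⟩ := exists_sub_eq_exp_mul_I_mul horth
    obtain ⟨hq, hξ⟩ := sub_eq_mul_one_add_conj_mul_iff.1 hA
    exact ⟨A, hq, congrArg udir hξ⟩
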